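/- For every natural number n and all real numbers x, s with x ≥ 0, setting Z m = L (2m) (Real.sqrt x) s - 2·s^m, one has Z (n+3) - (x + 3s)·Z (n+2) + s·(x + 3s)·Z (n+1) - s^3·Z n = 0. -/
import Mathlib


/-- Bivariate Lucas polynomials. -/
def L : ℕ → ℝ → ℝ → ℝ
  | 0, _, _ => 2
  | 1, x, _ => x
  | n + 2, x, s => x * L (n + 1) x s + s * L n x s

lemma Leven (m : ℕ) (y s : ℝ) :
    L (2 * (m + 2)) y s = (y ^ 2 + 2 * s) * L (2 * (m + 1)) y s - s ^ 2 * L (2 * m) y s := by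
  have h4 : 2 * (m + 2) = (2 * m + 2) + 2 := by ring
  have h3 : 2 * m + 3 = (2 * m + 1) + 2 := by ring
  have h2 : 2 * (m + 1) = 2 * m + 2 := by ring
  rw [h4, h2]
  show y * L (2 * m + 3) y s + s * L (2 * m + 2) y s = _
  rw [h3]
  show y * (y * L (2 * m + 2) y s + s * L (2 * m + 1) y s) + s * L (2 * m + 2) y s = _
  have : L (2 * m + 2) y s = y * L (2 * m + 1) y s + s * L (2 * m) y s := rfl
  rw [this]; ring

theorem stmt_4 (n : ℕ) (x s : ℝ) (hx : x ≥ 0) :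
    (fun Z : ℕ → ℝ =>
      Z (n + 3) - (x + 3 * s) * Z (n + 2) + s * (x + 3 * s) * Z (n + 1) - s ^ 3 * Z n = 0)
      (fun m => L (2 * m) (Real.sqrt x) s - 2 * s ^ m) := by
  simp only
  have hy : Real.sqrt x ^ 2 = x := Real.sq_sqrt hx
  have h1 := Leven n (Real.sqrt x) s
  have h2 := Leven (n + 1) (Real.sqrt x) s
  rw [hy] at h1 h2
  have e1 : n + 1 + 1 = n + 2 := by ring
  have e2 : n + 1 + 2 = n + 3 := by ring
  rw [e1] at h1
  rw [e1, e2] at h2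
  rw [h2, h1]
  ring
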